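/- Let $\mathbb{K}$ be a commutative ring, $A$ a $\mathbb{K}$-algebra, $M$ a complex in the derived category $\mathsf{D}(\mathsf{Mod}\,A)$ of left $A$-modules, and $i_0$ an integer. Suppose that $\mathrm{H}^i M = 0$ for all $i > i_0$, and that $P := \mathrm{H}^{i_0} M$ is a projective $A$-module. Then there is an isomorphism $M \cong P[-i_0] \oplus N$ in $\mathsf{D}(\mathsf{Mod}\,A)$, where $N$ is a complex satisfying $N^i = 0$ for all $i \geq i_0$. -/

import Mathlib

/-!
Represent `M` by a complex `X` with `Xⁱ = 0` for `i > i₀`. Projectivity of `P = H^{i₀} X` gives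
a section `P ⟶ Z^{i₀} X` of the projection onto homology, hence a chain map `P[-i₀] ⟶ X`
inducing an isomorphism on `H^{i₀}`. Together with the canonical truncation
`τ^{≤ i₀ - 1} X ⟶ X`, which carries all the homology in degrees `< i₀`, it gives a
quasi-isomorphism `P[-i₀] ⊞ τ^{≤ i₀ - 1} X ⟶ X`.
-/

open CategoryTheory Limits HomologicalComplex

section Biprod

variable {C D : Type*} [Category C] [Category D] [Preadditive C] [Preadditive D]
  [HasBinaryBiproducts C]

lemma CategoryTheory.Functor.isIso_map_biprod_inl (F : C ⥤ D) [F.Additive] {X Y : C}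
    (hY : IsZero (F.obj Y)) : IsIso (F.map (biprod.inl : X ⟶ X ⊞ Y)) := by
  have := preservesBinaryBiproducts_of_preservesBiproducts F
  have : F.map biprod.inl = (isoBiprodZero hY).hom ≫ (F.mapBiprod X Y).inv := by
    rw [isoBiprodZero_hom, Functor.mapBiprod_inv]
    exact (biprod.inl_desc _ _).symm
  rw [this]
  infer_instance

lemma CategoryTheory.Functor.isIso_map_biprod_inr (F : C ⥤ D) [F.Additive] {X Y : C}
    (hX : IsZero (F.obj X)) : IsIso (F.map (biprod.inr : Y ⟶ X ⊞ Y)) := by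
  have := preservesBinaryBiproducts_of_preservesBiproducts F
  have : F.map biprod.inr = (isoZeroBiprod hX).hom ≫ (F.mapBiprod X Y).inv := by
    rw [isoZeroBiprod_hom, Functor.mapBiprod_inv]
    exact (biprod.inr_desc _ _).symm
  rw [this]
  infer_instance

end Biprod

namespace HomologicalComplex

variable {C ι : Type*} [Category C] [Abelian C] {c : ComplexShape ι}
  {K L X : HomologicalComplex C c}

lemma exactAt_biprod {i : ι} (hK : K.ExactAt i) (hL : L.ExactAt i) : (K ⊞ L).ExactAt i := by
  rw [exactAt_iff_isZero_homology]
  have := preservesBinaryBiproducts_of_preservesBiproducts (homologyFunctor C c i)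
  refine IsZero.of_iso ?_ ((homologyFunctor C c i).mapBiprod K L)
  exact (biprod_isZero_iff _ _).2 ⟨hK.isZero_homology, hL.isZero_homology⟩

lemma quasiIsoAt_biprod_desc_of_exactAt_right (f : K ⟶ X) (g : L ⟶ X) {i : ι}
    [QuasiIsoAt f i] (hL : L.ExactAt i) : QuasiIsoAt (biprod.desc f g) i := by
  have : QuasiIsoAt (biprod.inl : K ⟶ K ⊞ L) i := by
    rw [quasiIsoAt_iff_isIso_homologyMap]
    exact (homologyFunctor C c i).isIso_map_biprod_inl hL.isZero_homology
  rw [← quasiIsoAt_iff_comp_left biprod.inl, biprod.inl_desc]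
  infer_instance

lemma quasiIsoAt_biprod_desc_of_exactAt_left (f : K ⟶ X) (g : L ⟶ X) {i : ι}
    (hK : K.ExactAt i) [QuasiIsoAt g i] : QuasiIsoAt (biprod.desc f g) i := by
  have : QuasiIsoAt (biprod.inr : L ⟶ K ⊞ L) i := by
    rw [quasiIsoAt_iff_isIso_homologyMap]
    exact (homologyFunctor C c i).isIso_map_biprod_inr hK.isZero_homology
  rw [← quasiIsoAt_iff_comp_left biprod.inr, biprod.inr_desc]
  infer_instance

variable [DecidableEq ι]

noncomputable def fromSingleOfCycles {j : ι} {A : C} (σ : A ⟶ X.cycles j) :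
    (single C c j).obj A ⟶ X :=
  mkHomFromSingle (σ ≫ X.iCycles j) (fun k _ => by simp)

lemma homologyMap_fromSingleOfCycles {j : ι} {A : C} (σ : A ⟶ X.cycles j) :
    homologyMap (fromSingleOfCycles σ) j =
      (singleObjHomologySelfIso c j A).hom ≫ σ ≫ X.homologyπ j := by
  have hcycles : cyclesMap (fromSingleOfCycles σ) j = (singleObjCyclesSelfIso c j A).hom ≫ σ := by
    rw [← cancel_mono (X.iCycles j), cyclesMap_i, fromSingleOfCycles, mkHomFromSingle_f,
      singleObjCyclesSelfIso_hom]
    simp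
  rw [← cancel_epi (((single C c j).obj A).homologyπ j), homologyπ_naturality, hcycles,
    homologyπ_singleObjHomologySelfIso_hom_assoc, Category.assoc]

lemma quasiIsoAt_fromSingleOfCycles {j : ι} {A : C} (σ : A ⟶ X.cycles j)
    [IsIso (σ ≫ X.homologyπ j)] : QuasiIsoAt (fromSingleOfCycles σ) j := by
  rw [quasiIsoAt_iff_isIso_homologyMap, homologyMap_fromSingleOfCycles]
  infer_instance

end HomologicalComplex

namespace CochainComplex

variable {C : Type*} [Category C] [Abelian C]

lemma quasiIso_biprod_desc_ιTruncLE (X : CochainComplex C ℤ) {n₀ n : ℤ} (hn : n₀ + 1 = n)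
    [X.IsLE n] {P : C} (f : (single C (ComplexShape.up ℤ) n).obj P ⟶ X) [QuasiIsoAt f n] :
    QuasiIso (biprod.desc f (X.ιTruncLE n₀)) where
  quasiIsoAt i := by
    rcases lt_trichotomy i n with hi | rfl | hi
    · have := X.quasiIsoAt_ιTruncLE n₀ i (by omega)
      exact quasiIsoAt_biprod_desc_of_exactAt_left _ _ (exactAt_single_obj _ _ _ _ hi.ne)
    · exact quasiIsoAt_biprod_desc_of_exactAt_right _ _ ((X.truncLE n₀).exactAt_of_isLE n₀ i)
    · rw [quasiIsoAt_iff_exactAt _ _ (exactAt_biprod (exactAt_single_obj _ _ _ _ hi.ne')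
        ((X.truncLE n₀).exactAt_of_isLE n₀ i))]
      exact X.exactAt_of_isLE n i

end CochainComplex

namespace DerivedCategory

variable {C : Type*} [Category C] [Abelian C] [HasDerivedCategory C]

lemma exists_iso_singleFunctor_biprod_Q_obj (M : DerivedCategory C) (n : ℤ) [M.IsLE n]
    [Projective ((homologyFunctor C n).obj M)] :
    ∃ N : CochainComplex C ℤ, N.IsStrictlyLE (n - 1) ∧
      Nonempty (M ≅ (singleFunctor C n).obj ((homologyFunctor C n).obj M) ⊞ Q.obj N) := by
  obtain ⟨X, _, ⟨e⟩⟩ := M.exists_iso_Q_obj_of_isLE n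
  let β : X.homology n ≅ (homologyFunctor C n).obj M :=
    ((homologyFunctorFactors C n).app X).symm ≪≫ (homologyFunctor C n).mapIso e.symm
  let σ := Projective.factorThru (𝟙 _) (X.homologyπ n ≫ β.hom)
  have : IsIso (σ ≫ X.homologyπ n) := by
    have hσ : σ ≫ X.homologyπ n = β.inv := by
      rw [← cancel_mono β.hom, Category.assoc, Projective.factorThru_comp, β.inv_hom_id]
    rw [hσ]
    infer_instance
  have := quasiIsoAt_fromSingleOfCycles σ
  let φ := biprod.desc (fromSingleOfCycles σ) (X.ιTruncLE (n - 1))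
  have : QuasiIso φ := X.quasiIso_biprod_desc_ιTruncLE (sub_add_cancel n 1) _
  have := preservesBinaryBiproducts_of_preservesBiproducts (Q : CochainComplex C ℤ ⥤ _)
  exact ⟨X.truncLE (n - 1), inferInstance, ⟨e ≪≫ (asIso (Q.map φ)).symm ≪≫ Q.mapBiprod _ _⟩⟩

end DerivedCategory

theorem stmt0_general (A : Type*) [Ring A]
    [HasDerivedCategory (ModuleCat A)]
    (M : DerivedCategory (ModuleCat A)) (i₀ : ℤ)
    (hM : ∀ i : ℤ, i₀ < i → IsZero ((DerivedCategory.homologyFunctor (ModuleCat A) i).obj M))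
    (hP : Projective ((DerivedCategory.homologyFunctor (ModuleCat A) i₀).obj M)) :
    ∃ N : CochainComplex (ModuleCat A) ℤ,
      (∀ i : ℤ, i₀ ≤ i → IsZero (N.X i)) ∧
      Nonempty (M ≅
        ((DerivedCategory.singleFunctor (ModuleCat A) i₀).obj
          ((DerivedCategory.homologyFunctor (ModuleCat A) i₀).obj M)) ⊞
        (DerivedCategory.Q.obj N)) := by
  have : M.IsLE i₀ := (M.isLE_iff i₀).2 hM
  obtain ⟨N, _, e⟩ := M.exists_iso_singleFunctor_biprod_Q_obj i₀
  exact ⟨N, fun i hi => N.isZero_of_isStrictlyLE (i₀ - 1) i, e⟩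

/-- projective truncation trick.  Let `K` be a commutative ring, `A` a
`K`-algebra, `M` a complex in the derived category `D(Mod A)` of left `A`-modules and `i₀`
an integer.  Suppose that `Hⁱ M = 0` for all `i > i₀` and that `P := H^{i₀} M` is a
projective `A`-module.  Then there is an isomorphism `M ≅ P[-i₀] ⊞ N` in `D(Mod A)`,
where `N` is a complex satisfying `Nⁱ = 0` for all `i ≥ i₀`.
(Here `P[-i₀]` is the complex consisting of `P` placed in degree `i₀`, i.e. the image of
`P` under the functor `DerivedCategory.singleFunctor (ModuleCat A) i₀`.) -/
theorem stmt0 (K : Type*) [CommRing K] (A : Type*) [Ring A] [Algebra K A]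
    [HasDerivedCategory (ModuleCat A)]
    (M : DerivedCategory (ModuleCat A)) (i₀ : ℤ)
    (hM : ∀ i : ℤ, i₀ < i → IsZero ((DerivedCategory.homologyFunctor (ModuleCat A) i).obj M))
    (hP : Projective ((DerivedCategory.homologyFunctor (ModuleCat A) i₀).obj M)) :
    ∃ N : CochainComplex (ModuleCat A) ℤ,
      (∀ i : ℤ, i₀ ≤ i → IsZero (N.X i)) ∧
      Nonempty (M ≅
        ((DerivedCategory.singleFunctor (ModuleCat A) i₀).obj
          ((DerivedCategory.homologyFunctor (ModuleCat A) i₀).obj M)) ⊞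
        (DerivedCategory.Q.obj N)) :=
  stmt0_general A M i₀ hM hP
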